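/- arXiv:1506.04439 — 2 statements merged into one kernel-verified Lean document; each statement's English description precedes it below -/
import Mathlib

section
/- Let g be a continuous concave distortion function and assume Y* := sup_{t∈[0,T]} Y_t ∈ 𝒳_g. Let (τ^r_n)_{n∈ℕ} be a sequence of randomized stopping times in 𝒯^r such that (Y^r_{τ^r_n})_{n∈ℕ} converges in law to Y^r_{τ^r} for some τ^r ∈ 𝒯^r. Then lim_{n→∞} ℰ^g(Y^r_{τ^r_n}) = ℰ^g(Y^r_{τ^r}). -/
/-!
`ℰ^g(X) = ∫₀^∞ g(1 − F_X(x)) dx`. Convergence in law gives `F_n(x) → F(x)` off the countable,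
hence Lebesgue-null, set of discontinuities of the monotone limit `F`, so the integrands converge
almost everywhere by continuity of `g`. Since `Y^r_σ ≤ Y*` for every randomized stopping time `σ`,
each integrand is bounded by `g(1 − F_{Y*})`, which is integrable because `Y* ∈ 𝒳_g`; dominated
convergence concludes.
-/

open MeasureTheory Set Filter

noncomputable section

namespace DistortedStopping

variable {Ω : Type*}

/-- Distribution function of a real random variable under `P`. -/
def cdf {mΩ : MeasurableSpace Ω} (P : Measure Ω) (X : Ω → ℝ) (x : ℝ) : ℝ :=
  (P {ω | X ω ≤ x}).toReal

/-- Distorted expectation of a nonnegative random variable: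
`ℰ^g(X) = ∫₀^∞ g(1 − F_X(x)) dx`. -/
def distExp {mΩ : MeasurableSpace Ω} (g : ℝ → ℝ) (P : Measure Ω) (X : Ω → ℝ) : ℝ :=
  ∫ x in Ioi (0:ℝ), g (1 - cdf P X x)

/-- Full distorted expectation (for possibly signed random variables). -/
def distExpFull {mΩ : MeasurableSpace Ω} (g : ℝ → ℝ) (P : Measure Ω) (X : Ω → ℝ) : ℝ :=
  (∫ x in Ioi (0:ℝ), g (1 - cdf P X x)) - ∫ x in Iic (0:ℝ), (1 - g (1 - cdf P X x))

/-- `X ∈ 𝒳_g`, i.e. `∫₀^∞ g(1 − F_{|X|}(x)) dx < ∞`. -/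
def MemXg {mΩ : MeasurableSpace Ω} (g : ℝ → ℝ) (P : Measure Ω) (X : Ω → ℝ) : Prop :=
  ∫⁻ x in Ioi (0:ℝ), ENNReal.ofReal (g (1 - cdf P (fun ω => |X ω|) x)) < ⊤

/-- `g` is a continuous concave distortion function. -/
def IsContConcaveDistortion (g : ℝ → ℝ) : Prop :=
  g 0 = 0 ∧ g 1 = 1 ∧ MonotoneOn g (Icc 0 1) ∧ ContinuousOn g (Icc 0 1) ∧
    ConcaveOn ℝ (Icc 0 1) g

/-- `μ` is the probability measure `μ_g` on `(0,1]` associated with the continuous concave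
distortion function `g`, characterized by `g'(x) = ∫_{(x,1]} (1/u) μ(du)` for `x ∈ (0,1)`,
`g'` being the right-sided derivative. -/
def IsDistortionMeasure (g : ℝ → ℝ) (μ : Measure ℝ) : Prop :=
  IsProbabilityMeasure μ ∧ μ (Ioc (0:ℝ) 1)ᶜ = 0 ∧
    ∀ x ∈ Ioo (0:ℝ) 1, derivWithin g (Ioi x) x = ∫ u in Ioc x 1, 1 / u ∂μ

/-- `L¹₊(μ)`: nonnegative Borel `μ`-integrable functions on `(0,1]`. -/
def L1plus (μ : Measure ℝ) : Set (ℝ → ℝ) :=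
  {Z | Measurable Z ∧ (∀ α ∈ Ioc (0:ℝ) 1, 0 ≤ Z α) ∧ Integrable Z μ}

/-- `{Z ∈ L¹₊(μ) : Z(1) = 0}`. -/
def L1plus0 (μ : Measure ℝ) : Set (ℝ → ℝ) := {Z | Z ∈ L1plus μ ∧ Z 1 = 0}

/-- `∫_{(0,1]} ((v − Z(α))⁺/α + Z(α)) μ(dα)`. -/
def Uval (μ : Measure ℝ) (Z : ℝ → ℝ) (v : ℝ) : ℝ :=
  ∫ α in Ioc (0:ℝ) 1, (max (v - Z α) 0 / α + Z α) ∂μ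

/-- `L¹[Y*, μ]`. -/
def L1Ystar {mΩ : MeasurableSpace Ω} (P : Measure Ω) (μ : Measure ℝ) (Ystar : Ω → ℝ) :
    Set (ℝ → ℝ) :=
  {Z | Z ∈ L1plus0 μ ∧
    ∫⁻ ω, ∫⁻ α in Ioc (0:ℝ) 1, ENNReal.ofReal (max (Ystar ω - Z α) 0 / α) ∂μ ∂P < ⊤}

/-- `L¹₊(μ, Z°)`: those `Z ∈ L¹₊(μ)` with `Z(1) = 0` dominating `Z°` near `0`. -/
def L1plusRel (μ : Measure ℝ) (Zo : ℝ → ℝ) : Set (ℝ → ℝ) :=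
  {Z | Z ∈ L1plus μ ∧ Z 1 = 0 ∧ ∃ a ∈ Ioo (0:ℝ) 1, ∀ α ∈ Ioc (0:ℝ) a, Zo α ≤ Z α}

/-- `𝓛*_𝒵(μ, Z°) = {1_{(0,a]}·Z° + Z : Z ∈ 𝒵, a ∈ (0,1)}`. -/
def Lstar (Zo : ℝ → ℝ) (𝒵 : Set (ℝ → ℝ)) : Set (ℝ → ℝ) :=
  {W | ∃ Z ∈ 𝒵, ∃ a ∈ Ioo (0:ℝ) 1, W = fun α => (Ioc (0:ℝ) a).indicator Zo α + Z α}

/-- The set `𝒯` of stopping times with values in `[0, T]`. -/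
def StopTimes {mΩ : MeasurableSpace Ω} (ℱ : Filtration ℝ mΩ) (T : ℝ) : Set (Ω → ℝ) :=
  {τ | IsStoppingTime ℱ (fun ω => (τ ω : WithTop ℝ)) ∧ ∀ ω, τ ω ∈ Icc 0 T}

/-- `𝒵` is a dense subset of `S` w.r.t. the `L¹(μ)`-norm. -/
def DenseL1 (μ : Measure ℝ) (𝒵 S : Set (ℝ → ℝ)) : Prop :=
  𝒵 ⊆ S ∧ ∀ Z ∈ S, ∀ ε > 0, ∃ W ∈ 𝒵, ∫ α in Ioc (0:ℝ) 1, |W α - Z α| ∂μ < ε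

/-- The probability space `(Ω, m, P|_m)` is atomless. -/
def AtomlessOn {mΩ : MeasurableSpace Ω} (P : Measure Ω) (m : MeasurableSpace Ω) : Prop :=
  ∀ A : Set Ω, MeasurableSet[m] A → 0 < P A →
    ∃ B ⊆ A, MeasurableSet[m] B ∧ 0 < P B ∧ P B < P A

/-- Standing assumptions on the filtered probability space: `0 < T < ∞`,
right-continuous filtration, `𝓕₀` contains only events of probability `0` or `1`
and all `P`-null sets. -/
structure FilteredSetup {mΩ : MeasurableSpace Ω} (P : Measure Ω) (ℱ : Filtration ℝ mΩ)
    (T : ℝ) : Prop where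
  posT : 0 < T
  rightCont : ∀ t : ℝ, (ℱ t : MeasurableSpace Ω) = ⨅ (s : ℝ) (_ : t < s), (ℱ s : MeasurableSpace Ω)
  trivial0 : ∀ A : Set Ω, MeasurableSet[ℱ 0] A → P A = 0 ∨ P A = 1
  null0 : ∀ A : Set Ω, MeasurableSet A → P A = 0 → MeasurableSet[ℱ 0] A

/-- Standing assumptions on the reward process: right-continuous, nonnegative,
adapted, with bounded paths on `[0,T]`. -/
structure ProcessSetup {mΩ : MeasurableSpace Ω} (P : Measure Ω) (ℱ : Filtration ℝ mΩ)
    (T : ℝ) (Y : ℝ → Ω → ℝ) : Prop where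
  adapted : Adapted ℱ Y
  rightCont : ∀ ω, ∀ t : ℝ, ContinuousWithinAt (fun s => Y s ω) (Ici t) t
  nonneg : ∀ t ω, 0 ≤ Y t ω
  bddPaths : ∀ ω, ∃ C : ℝ, ∀ t ∈ Icc (0:ℝ) T, Y t ω ≤ C

/-- `(Ω, 𝓕_t, P|_{𝓕_t})` is atomless with countably generated `𝓕_t` for every `t > 0`. -/
def AtomlessCountGen {mΩ : MeasurableSpace Ω} (P : Measure Ω) (ℱ : Filtration ℝ mΩ) : Prop :=
  ∀ t : ℝ, 0 < t → AtomlessOn P (ℱ t) ∧ @MeasurableSpace.CountablyGenerated Ω (ℱ t)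

/-- `Y* = sup_{t ∈ [0,T]} Y_t`. -/
def Ysup (T : ℝ) (Y : ℝ → Ω → ℝ) (ω : Ω) : ℝ := ⨆ t : Icc (0:ℝ) T, Y t ω

/-- The optimal value `sup_{τ ∈ 𝒯} ℰ^g(Y_τ)`. -/
def stopVal {mΩ : MeasurableSpace Ω} (g : ℝ → ℝ) (P : Measure Ω) (ℱ : Filtration ℝ mΩ)
    (T : ℝ) (Y : ℝ → Ω → ℝ) : ℝ :=
  sSup ((fun τ => distExp g P (fun ω => Y (τ ω) ω)) '' StopTimes ℱ T)

/-- `sup_{τ ∈ 𝒯} E[U^{g,Z}_τ]`. -/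
def UexpVal {mΩ : MeasurableSpace Ω} (P : Measure Ω) (μ : Measure ℝ) (ℱ : Filtration ℝ mΩ)
    (T : ℝ) (Y : ℝ → Ω → ℝ) (Z : ℝ → ℝ) : ℝ :=
  sSup ((fun τ => ∫ ω, Uval μ Z (Y (τ ω) ω) ∂P) '' StopTimes ℱ T)


/-- Left-continuous quantile function of a distribution function `F`. -/
def leftQuantile (F : ℝ → ℝ) (β : ℝ) : ℝ := sInf {x : ℝ | β ≤ F x}

/-- Bernstein basis polynomial `B_{i,n}(α) = C(n,i) α^i (1−α)^{n−i}`. -/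
def bern (n i : ℕ) (α : ℝ) : ℝ := (n.choose i : ℝ) * α ^ i * (1 - α) ^ (n - i)

/-- `𝒵_B`: Bernstein polynomials `Σ_{i=0}^{n−1} b_i B_{i,n}` with nonnegative coefficients. -/
def ZBset : Set (ℝ → ℝ) :=
  {Z | ∃ n : ℕ, 0 < n ∧ ∃ b : ℕ → ℝ, (∀ i < n, 0 ≤ b i) ∧
    Z = fun α => ∑ i ∈ Finset.range n, b i * bern n i α}

/-- `𝒵_B^δ`: as `𝒵_B` but with `b₀ ≥ δ`. -/
def ZBdelta (δ : ℝ) : Set (ℝ → ℝ) :=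
  {Z | ∃ n : ℕ, 0 < n ∧ ∃ b : ℕ → ℝ, δ ≤ b 0 ∧ (∀ i < n, 0 ≤ b i) ∧
    Z = fun α => ∑ i ∈ Finset.range n, b i * bern n i α}

/-- A randomized stopping time bounded by `T`: nondecreasing and left-continuous in the
second (randomization) component, a stopping time in the first one. -/
def IsRandomizedST {mΩ : MeasurableSpace Ω} (ℱ : Filtration ℝ mΩ) (T : ℝ)
    (τ : Ω → ℝ → ℝ) : Prop :=
  (∀ ω, MonotoneOn (τ ω) (Icc 0 1)) ∧
  (∀ ω, ∀ u ∈ Ioc (0:ℝ) 1, ContinuousWithinAt (τ ω) (Iio u) u) ∧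
  (∀ u ∈ Icc (0:ℝ) 1, IsStoppingTime ℱ (fun ω => τ ω u)) ∧
  (∀ ω, ∀ u ∈ Icc (0:ℝ) 1, τ ω u ∈ Icc 0 T)

/-- The uniform distribution `P^U` on `[0,1]`. -/
def PU : Measure ℝ := volume.restrict (Icc (0:ℝ) 1)

/-- `Y^r_{τ^r}(ω, u) = Y_{τ^r(ω,u)}(ω)` on `Ω × [0,1]`. -/
def Yrand (Y : ℝ → Ω → ℝ) (τ : Ω → ℝ → ℝ) : Ω × ℝ → ℝ := fun p => Y (τ p.1 p.2) p.1

/-- Quasi-left-continuity of the process `(Y_t)`. -/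
def QuasiLeftCont {mΩ : MeasurableSpace Ω} (P : Measure Ω) (ℱ : Filtration ℝ mΩ)
    (Y : ℝ → Ω → ℝ) : Prop :=
  ∀ (σ : ℕ → Ω → ℝ) (σ' : Ω → ℝ), (∀ n, IsStoppingTime ℱ (fun ω => (σ n ω : WithTop ℝ))) →
    IsStoppingTime ℱ (fun ω => (σ' ω : WithTop ℝ)) →
    (∀ ω, Monotone fun n => σ n ω) →
    (∀ ω, Tendsto (fun n => σ n ω) atTop (nhds (σ' ω))) →
    ∀ᵐ ω ∂P, Tendsto (fun n => Y (σ n ω) ω) atTop (nhds (Y (σ' ω) ω))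

/-- The set `𝓜₀` of right-continuous martingales on `[0,T]` with `M₀ = 0` and
`sup_{t∈[0,T]} |M_t| ∈ L¹`. Martingale property is stated on `[0,T]` via conditional
expectations. -/
def MartSet {mΩ : MeasurableSpace Ω} (P : Measure Ω) (ℱ : Filtration ℝ mΩ) (T : ℝ) :
    Set (ℝ → Ω → ℝ) :=
  {M | (∀ t ∈ Icc (0:ℝ) T, StronglyMeasurable[ℱ t] (M t)) ∧
    (∀ t ∈ Icc (0:ℝ) T, Integrable (M t) P) ∧
    (∀ s ∈ Icc (0:ℝ) T, ∀ t ∈ Icc (0:ℝ) T, s ≤ t → P[M t|ℱ s] =ᵐ[P] M s) ∧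
    (∀ ω, ∀ t : ℝ, ContinuousWithinAt (fun s => M s ω) (Ici t) t) ∧
    (∀ᵐ ω ∂P, M 0 ω = 0) ∧
    Integrable (fun ω => ⨆ t : Icc (0:ℝ) T, |M (↑t) ω|) P}

/-- A law-invariant coherent risk measure `ρ` on a solid vector space `𝒳` of integrable
random variables containing the essentially bounded ones. -/
structure CoherentRM {mΩ : MeasurableSpace Ω} (P : Measure Ω) (𝒳 : Set (Ω → ℝ))
    (ρ : (Ω → ℝ) → ℝ) : Prop where
  memLinfty : ∀ X : Ω → ℝ, Measurable X → (∃ C : ℝ, ∀ᵐ ω ∂P, |X ω| ≤ C) → X ∈ 𝒳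
  memL1 : ∀ X ∈ 𝒳, Integrable X P
  addMem : ∀ X ∈ 𝒳, ∀ X' ∈ 𝒳, (fun ω => X ω + X' ω) ∈ 𝒳
  smulMem : ∀ (c : ℝ), ∀ X ∈ 𝒳, (fun ω => c * X ω) ∈ 𝒳
  absMem : ∀ X ∈ 𝒳, (fun ω => |X ω|) ∈ 𝒳
  solid : ∀ X : Ω → ℝ, Integrable X P → ∀ X' ∈ 𝒳,
    (∀ᵐ ω ∂P, |X ω| ≤ |X' ω|) → X ∈ 𝒳
  mono : ∀ X ∈ 𝒳, ∀ X' ∈ 𝒳, (∀ᵐ ω ∂P, X' ω ≤ X ω) →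
    ρ X' ≤ ρ X
  sublin : ∀ X ∈ 𝒳, ∀ X' ∈ 𝒳, ∀ a b : ℝ, 0 ≤ a → 0 ≤ b →
    ρ (fun ω => a * X ω + b * X' ω) ≤ a * ρ X + b * ρ X'
  transl : ∀ X ∈ 𝒳, ∀ a : ℝ, ρ (fun ω => X ω + a) = ρ X + a
  cutoff : ∀ X ∈ 𝒳, (∀ᵐ ω ∂P, 0 ≤ X ω) →
    Tendsto (fun k : ℕ => ρ (fun ω => max (X ω - k) 0)) atTop (nhds 0)
  lawInv : ∀ X ∈ 𝒳, ∀ X' ∈ 𝒳,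
    (∀ x : ℝ, (P {ω | X ω ≤ x}).toReal = (P {ω | X' ω ≤ x}).toReal) → ρ X = ρ X'

instance : IsProbabilityMeasure PU :=
  ⟨by simp [PU, Real.volume_Icc]⟩

section Cdf

variable {mΩ : MeasurableSpace Ω} {P : Measure Ω}

theorem cdf_monotone [IsFiniteMeasure P] (X : Ω → ℝ) : Monotone (cdf P X) := fun _ _ hab =>
  ENNReal.toReal_mono (measure_ne_top P _) (measure_mono fun _ h => le_trans h hab)

theorem cdf_mem_Icc [IsProbabilityMeasure P] (X : Ω → ℝ) (x : ℝ) : cdf P X x ∈ Icc (0:ℝ) 1 :=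
  ⟨ENNReal.toReal_nonneg, by simpa [cdf] using ENNReal.toReal_mono ENNReal.one_ne_top prob_le_one⟩

theorem cdf_le_cdf_of_ae_le [IsFiniteMeasure P] {X Z : Ω → ℝ} (h : X ≤ᵐ[P] Z) (x : ℝ) :
    cdf P Z x ≤ cdf P X x :=
  ENNReal.toReal_mono (measure_ne_top P _) (measure_mono_ae (h.mono fun _ hω hZ => hω.trans hZ))

theorem cdf_prod_comp_fst {Ω' : Type*} {mΩ' : MeasurableSpace Ω'} [SFinite P] (Q : Measure Ω')
    [IsProbabilityMeasure Q] (Z : Ω → ℝ) : cdf (P.prod Q) (fun p => Z p.1) = cdf P Z := by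
  funext x
  have hset : {p : Ω × Ω' | Z p.1 ≤ x} = {ω | Z ω ≤ x} ×ˢ univ := by ext; simp
  rw [cdf, cdf, hset, Measure.prod_prod, measure_univ, mul_one]

end Cdf

section DistortedCdf

variable {mΩ : MeasurableSpace Ω} {P : Measure Ω} [IsProbabilityMeasure P] {g : ℝ → ℝ}

theorem one_sub_cdf_mem_Icc (X : Ω → ℝ) (x : ℝ) : 1 - cdf P X x ∈ Icc (0:ℝ) 1 :=
  Icc.one_sub_mem (cdf_mem_Icc X x)

theorem distortion_one_sub_cdf_nonneg (hg0 : g 0 = 0) (hg : MonotoneOn g (Icc 0 1))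
    (X : Ω → ℝ) (x : ℝ) : 0 ≤ g (1 - cdf P X x) :=
  hg0 ▸ hg (left_mem_Icc.2 zero_le_one) (one_sub_cdf_mem_Icc X x) (one_sub_cdf_mem_Icc X x).1

theorem antitone_distortion_one_sub_cdf (hg : MonotoneOn g (Icc 0 1)) (X : Ω → ℝ) :
    Antitone fun x => g (1 - cdf P X x) := fun _ _ hab =>
  hg (one_sub_cdf_mem_Icc X _) (one_sub_cdf_mem_Icc X _) (sub_le_sub_left (cdf_monotone X hab) 1)

theorem integrableOn_distortion_one_sub_cdf_of_memXg (hg0 : g 0 = 0)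
    (hg : MonotoneOn g (Icc 0 1)) {Z : Ω → ℝ} (hZ : 0 ≤ Z) (hXg : MemXg g P Z) :
    IntegrableOn (fun x => g (1 - cdf P Z x)) (Ioi 0) := by
  refine ⟨(antitone_distortion_one_sub_cdf hg Z).measurable.aestronglyMeasurable, ?_⟩
  rw [hasFiniteIntegral_iff_ofReal (ae_of_all _ (distortion_one_sub_cdf_nonneg hg0 hg Z))]
  simpa only [MemXg, abs_of_nonneg (hZ _)] using hXg

end DistortedCdf

theorem ae_tendsto_of_tendsto_of_continuousAt {F : ℕ → ℝ → ℝ} {G : ℝ → ℝ}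
    (hG : Monotone G) (h : ∀ x, ContinuousAt G x → Tendsto (fun n => F n x) atTop (nhds (G x)))
    (μ : Measure ℝ) [NullSingletonClass μ] :
    ∀ᵐ x ∂μ, Tendsto (fun n => F n x) atTop (nhds (G x)) :=
  (hG.countable_not_continuousAt.ae_notMem μ).mono fun x hx => h x (not_not.1 hx)

theorem tendsto_distExp_of_tendsto_cdf {mΩ : MeasurableSpace Ω} {P : Measure Ω}
    [IsProbabilityMeasure P] {g : ℝ → ℝ} (hg0 : g 0 = 0) (hg_mono : MonotoneOn g (Icc 0 1))
    (hg_cont : ContinuousOn g (Icc 0 1)) {X : ℕ → Ω → ℝ} {X' Z : Ω → ℝ}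
    (hZ : IntegrableOn (fun x => g (1 - cdf P Z x)) (Ioi 0))
    (hdom : ∀ n x, cdf P Z x ≤ cdf P (X n) x)
    (hlaw : ∀ x, ContinuousAt (cdf P X') x →
      Tendsto (fun n => cdf P (X n) x) atTop (nhds (cdf P X' x))) :
    Tendsto (fun n => distExp g P (X n)) atTop (nhds (distExp g P X')) := by
  refine tendsto_integral_of_dominated_convergence _
    (fun n => (antitone_distortion_one_sub_cdf hg_mono (X n)).measurable.aestronglyMeasurable)
    hZ (fun n => ae_of_all _ fun x => ?_) ?_
  · rw [Real.norm_of_nonneg (distortion_one_sub_cdf_nonneg hg0 hg_mono _ x)]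
    exact hg_mono (one_sub_cdf_mem_Icc _ x) (one_sub_cdf_mem_Icc _ x)
      (sub_le_sub_left (hdom n x) 1)
  · filter_upwards [ae_tendsto_of_tendsto_of_continuousAt (cdf_monotone X') hlaw _]
      with x hx
    exact (hg_cont _ (one_sub_cdf_mem_Icc X' x)).tendsto.comp <| tendsto_nhdsWithin_iff.2
      ⟨tendsto_const_nhds.sub hx, Eventually.of_forall fun n => one_sub_cdf_mem_Icc (X n) x⟩

section RandomizedStopping

variable {T : ℝ} {Y : ℝ → Ω → ℝ}

theorem Ysup_nonneg (hY : ∀ t ω, 0 ≤ Y t ω) : 0 ≤ Ysup T Y := fun ω =>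
  Real.iSup_nonneg fun t => hY t ω

theorem ae_Yrand_le_Ysup {mΩ : MeasurableSpace Ω} {P : Measure Ω} [SFinite P]
    (hY : ∀ ω, ∃ C : ℝ, ∀ t ∈ Icc (0:ℝ) T, Y t ω ≤ C) {σ : Ω → ℝ → ℝ}
    (hσ : ∀ ω, ∀ u ∈ Icc (0:ℝ) 1, σ ω u ∈ Icc 0 T) :
    ∀ᵐ p ∂(P.prod PU), Yrand Y σ p ≤ Ysup T Y p.1 := by
  filter_upwards [Measure.quasiMeasurePreserving_snd.ae (ae_restrict_mem measurableSet_Icc)]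
    with ⟨ω, u⟩ hu
  obtain ⟨C, hC⟩ := hY ω
  exact le_ciSup (f := fun t : Icc (0:ℝ) T => Y t ω) ⟨C, forall_mem_range.2 fun t => hC t t.2⟩
    ⟨σ ω u, hσ ω u hu⟩

end RandomizedStopping

theorem distorted_expectation_convergence_in_law_general
    {mΩ : MeasurableSpace Ω} (P : Measure Ω) [IsProbabilityMeasure P]
    (ℱ : Filtration ℝ mΩ) (T : ℝ) (Y : ℝ → Ω → ℝ)
    (hProc : ProcessSetup P ℱ T Y)
    (g : ℝ → ℝ) (hg : IsContConcaveDistortion g)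
    (hYstar : MemXg g P (Ysup T Y))
    (τs : ℕ → Ω → ℝ → ℝ) (hτs : ∀ n, IsRandomizedST ℱ T (τs n))
    (τ : Ω → ℝ → ℝ)
    (hlaw : ∀ x : ℝ, ContinuousAt (cdf (P.prod PU) (Yrand Y τ)) x →
      Tendsto (fun n => cdf (P.prod PU) (Yrand Y (τs n)) x) atTop
        (nhds (cdf (P.prod PU) (Yrand Y τ) x))) :
    Tendsto (fun n => distExp g (P.prod PU) (Yrand Y (τs n))) atTop
      (nhds (distExp g (P.prod PU) (Yrand Y τ))) := by
  obtain ⟨hg0, -, hg_mono, hg_cont, -⟩ := hg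
  have hYstar_int : IntegrableOn (fun x => g (1 - cdf (P.prod PU) (fun p => Ysup T Y p.1) x))
      (Ioi 0) := by
    rw [cdf_prod_comp_fst]
    exact integrableOn_distortion_one_sub_cdf_of_memXg hg0 hg_mono (Ysup_nonneg hProc.nonneg)
      hYstar
  exact tendsto_distExp_of_tendsto_cdf hg0 hg_mono hg_cont hYstar_int
    (fun n => cdf_le_cdf_of_ae_le (ae_Yrand_le_Ysup hProc.bddPaths (hτs n).2.2.2)) hlaw

/-- Lemma: continuity of `ℰ^g` along convergence in law: if `Y* ∈ 𝒳_g` and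
`(Y^r_{τ^r_n})` converges in law to `Y^r_{τ^r}` (pointwise convergence of the distribution
functions at all continuity points of the limit), then
`ℰ^g(Y^r_{τ^r_n}) → ℰ^g(Y^r_{τ^r})`. -/
theorem distorted_expectation_convergence_in_law
    {mΩ : MeasurableSpace Ω} (P : Measure Ω) [IsProbabilityMeasure P]
    (ℱ : Filtration ℝ mΩ) (T : ℝ) (Y : ℝ → Ω → ℝ)
    (hFil : FilteredSetup P ℱ T) (hProc : ProcessSetup P ℱ T Y)
    (g : ℝ → ℝ) (hg : IsContConcaveDistortion g)
    (hYstar : MemXg g P (Ysup T Y))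
    (τs : ℕ → Ω → ℝ → ℝ) (hτs : ∀ n, IsRandomizedST ℱ T (τs n))
    (τ : Ω → ℝ → ℝ) (hτ : IsRandomizedST ℱ T τ)
    (hlaw : ∀ x : ℝ, ContinuousAt (cdf (P.prod PU) (Yrand Y τ)) x →
      Tendsto (fun n => cdf (P.prod PU) (Yrand Y (τs n)) x) atTop
        (nhds (cdf (P.prod PU) (Yrand Y τ) x))) :
    Tendsto (fun n => distExp g (P.prod PU) (Yrand Y (τs n))) atTop
      (nhds (distExp g (P.prod PU) (Yrand Y τ))) :=
  distorted_expectation_convergence_in_law_general P ℱ T Y hProc g hg hYstar τs hτs τ hlaw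

end DistortedStopping
end
end

section
/- Let μ be a probability measure on the Borel σ-algebra of (0,1], and let 𝒵_B consist of all functions of the form Σ_{i=0}^{n−1} b_i B_{i,n} restricted to (0,1], with n ∈ ℕ and b₀,…,b_{n−1} ≥ 0, where B_{i,n}(α) = C(n,i) α^i (1−α)^{n−i}. Then 𝒵_B is dense in {Z ∈ L¹₊(μ) : Z(1) = 0} with respect to the L¹(μ)-norm: for every nonnegative μ-integrable Borel function Z on (0,1] with Z(1)=0 and every ε > 0, there exists φ ∈ 𝒵_B with ∫_{(0,1]} |φ − Z| dμ < ε. -/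
/-! Approximate `Z` in `L¹(μ|(0,1])` by a continuous function `h`. Clipping `h` at `0` keeps it
close since `Z ≥ 0`; multiplying it by a continuous cutoff that vanishes at `1` and increases to
`1` on `(-∞, 1)` costs arbitrarily little by dominated convergence, since `Z 1 = 0`. The resulting
continuous `f ≥ 0` with `f 1 = 0` is uniformly approximated on `[0,1]` by its Bernstein polynomials
`∑_{i ≤ n} f (i/n) B_{i,n}`, whose top coefficient `f 1` vanishes, and on a probability space
uniform approximation implies `L¹` approximation. -/

open MeasureTheory Set Filter

noncomputable section

namespace DistortedStopping

variable {Ω : Type*}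

def cutoffAtOne (n : ℕ) (x : ℝ) : ℝ := min 1 (max (n * (1 - x)) 0)

theorem continuous_cutoffAtOne (n : ℕ) : Continuous (cutoffAtOne n) := by
  unfold cutoffAtOne
  fun_prop

theorem cutoffAtOne_nonneg (n : ℕ) (x : ℝ) : 0 ≤ cutoffAtOne n x :=
  le_min zero_le_one (le_max_right _ _)

theorem cutoffAtOne_le_one (n : ℕ) (x : ℝ) : cutoffAtOne n x ≤ 1 :=
  min_le_left _ _

theorem cutoffAtOne_one (n : ℕ) : cutoffAtOne n 1 = 0 := by
  simp [cutoffAtOne]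

theorem tendsto_cutoffAtOne (x : ℝ) :
    Tendsto (fun n : ℕ => cutoffAtOne n x) atTop (nhds ((Iio 1).indicator 1 x)) := by
  rcases lt_or_ge x 1 with hx | hx
  · rw [indicator_of_mem (mem_Iio.2 hx), Pi.one_apply]
    obtain ⟨N, hN⟩ := exists_nat_ge (1 / (1 - x))
    refine tendsto_const_nhds.congr' ?_
    filter_upwards [eventually_ge_atTop N] with n hn
    have : 1 ≤ n * (1 - x) := by
      rw [div_le_iff₀ (sub_pos.2 hx)] at hN
      nlinarith [(Nat.cast_le (α := ℝ)).2 hn]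
    simp [cutoffAtOne, this, le_trans zero_le_one this]
  · rw [indicator_of_notMem (notMem_Iio.2 hx)]
    refine tendsto_const_nhds.congr fun n => ?_
    simp [cutoffAtOne, mul_nonpos_of_nonneg_of_nonpos (Nat.cast_nonneg n) (sub_nonpos.2 hx)]

theorem tendsto_integral_abs_mul_cutoffAtOne_sub {μ : Measure ℝ} {g Z : ℝ → ℝ}
    (hg : Integrable g μ) (hZ : Integrable Z μ) :
    Tendsto (fun n : ℕ => ∫ x, |g x * cutoffAtOne n x - Z x| ∂μ) atTop
      (nhds (∫ x, |(Iio 1).indicator g x - Z x| ∂μ)) := by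
  refine tendsto_integral_of_dominated_convergence (fun x => |g x| + |Z x|)
    (fun n => ((hg.1.mul (continuous_cutoffAtOne n).aestronglyMeasurable).sub hZ.1).norm)
    (hg.abs.add hZ.abs) (fun n => ae_of_all _ fun x => ?_) (ae_of_all _ fun x => ?_)
  · rw [Real.norm_eq_abs, abs_abs]
    refine (abs_sub _ _).trans (add_le_add_left ?_ _)
    rw [abs_mul, abs_of_nonneg (cutoffAtOne_nonneg n x)]
    exact mul_le_of_le_one_right (abs_nonneg _) (cutoffAtOne_le_one n x)
  · have h := ((tendsto_cutoffAtOne x).const_mul (g x)).sub_const (Z x) |>.abs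
    simpa only [← indicator_mul_right, Pi.one_apply, mul_one] using h

theorem exists_continuous_nonneg_setIntegral_abs_sub_lt (μ : Measure ℝ) [IsFiniteMeasure μ]
    {Z : ℝ → ℝ} (hZ : IntegrableOn Z (Ioc 0 1) μ) (hZ0 : ∀ α ∈ Ioc (0:ℝ) 1, 0 ≤ Z α)
    (hZ1 : Z 1 = 0) {ε : ℝ} (hε : 0 < ε) :
    ∃ f : ℝ → ℝ, Continuous f ∧ (∀ x, 0 ≤ f x) ∧ f 1 = 0 ∧
      ∫ α in Ioc 0 1, |f α - Z α| ∂μ < ε := by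
  obtain ⟨h, -, hZh, hh, hhint⟩ := Integrable.exists_hasCompactSupport_integral_sub_le hZ
    (half_pos hε)
  set g : ℝ → ℝ := fun x => max (h x) 0
  have hg : Continuous g := hh.max continuous_const
  have hgint : IntegrableOn g (Ioc 0 1) μ := hg.integrableOn_Ioc
  have hlim : ∫ α in Ioc 0 1, |(Iio 1).indicator g α - Z α| ∂μ < ε := by
    refine lt_of_le_of_lt ?_ ((half_lt_self hε).trans_le' hZh)
    refine setIntegral_mono_on ((hgint.indicator measurableSet_Iio).sub hZ).abs
      (hZ.sub hhint).norm measurableSet_Ioc fun α hα => ?_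
    rcases hα.2.lt_or_eq with hα1 | rfl
    · rw [indicator_of_mem (mem_Iio.2 hα1), Real.norm_eq_abs, abs_sub_comm (Z α)]
      simpa only [max_eq_left (hZ0 α hα)] using abs_max_sub_max_le_abs (h α) (Z α) 0
    · simp [hZ1]
  obtain ⟨n, hn⟩ :=
    ((tendsto_integral_abs_mul_cutoffAtOne_sub hgint hZ).eventually_lt_const hlim).exists
  exact ⟨fun x => g x * cutoffAtOne n x, hg.mul (continuous_cutoffAtOne n),
    fun x => mul_nonneg (le_max_right _ _) (cutoffAtOne_nonneg n x),
    by simp only [cutoffAtOne_one, mul_zero], hn⟩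

theorem continuous_of_mem_ZBset {φ : ℝ → ℝ} (hφ : φ ∈ ZBset) : Continuous φ := by
  obtain ⟨n, -, b, -, rfl⟩ := hφ
  unfold bern
  fun_prop

theorem bernsteinApproximation_apply_eq_sum_bern {f : ℝ → ℝ} (hf : Continuous f) (hf1 : f 1 = 0)
    {n : ℕ} (hn : n ≠ 0) (x : unitInterval) :
    bernsteinApproximation n ⟨fun y => f y, hf.comp continuous_subtype_val⟩ x =
      ∑ i ∈ Finset.range n, f (i / n) * bern n i x := by
  rw [bernsteinApproximation.apply]
  change ∑ k : Fin (n + 1), bernstein n k x • f ((k : ℕ) / n) = _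
  rw [Fin.sum_univ_eq_sum_range (fun i => bernstein n i x • f (i / n)), Finset.sum_range_succ]
  simp [bernstein_apply, bern, div_self (Nat.cast_ne_zero (R := ℝ) |>.2 hn), hf1, mul_comm]

theorem exists_mem_ZBset_abs_sub_le {f : ℝ → ℝ} (hf : Continuous f) (hf0 : ∀ x, 0 ≤ f x)
    (hf1 : f 1 = 0) {ε : ℝ} (hε : 0 < ε) :
    ∃ φ ∈ ZBset, ∀ α ∈ Icc (0:ℝ) 1, |φ α - f α| ≤ ε := by
  obtain ⟨N, hN⟩ := Metric.tendsto_atTop.mp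
    (bernsteinApproximation_uniform ⟨fun y => f y, hf.comp continuous_subtype_val⟩) ε hε
  refine ⟨fun α => ∑ i ∈ Finset.range (N + 1), f (i / (N + 1 : ℕ)) * bern (N + 1) i α,
    ⟨N + 1, N.succ_pos, _, fun i _ => hf0 _, rfl⟩, fun α hα => ?_⟩
  dsimp only
  rw [← bernsteinApproximation_apply_eq_sum_bern hf hf1 (n := N + 1) N.succ_ne_zero ⟨α, hα⟩]
  exact (ContinuousMap.dist_apply_le_dist ⟨α, hα⟩).trans (hN (N + 1) N.le_succ).le

theorem setIntegral_abs_sub_le_add {μ : Measure ℝ} {s : Set ℝ} {f g h : ℝ → ℝ}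
    (hf : IntegrableOn f s μ) (hg : IntegrableOn g s μ) (hh : IntegrableOn h s μ) :
    ∫ x in s, |f x - h x| ∂μ ≤ ∫ x in s, |f x - g x| ∂μ + ∫ x in s, |g x - h x| ∂μ := by
  calc ∫ x in s, |f x - h x| ∂μ ≤ ∫ x in s, (|f x - g x| + |g x - h x|) ∂μ :=
        integral_mono (hf.sub hh).abs ((hf.sub hg).abs.add (hg.sub hh).abs)
          fun x => abs_sub_le (f x) (g x) (h x)
    _ = _ := integral_add (hf.sub hg).abs (hg.sub hh).abs

theorem bernstein_dense_L1_general
    (μ : Measure ℝ) [IsProbabilityMeasure μ]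
    (Z : ℝ → ℝ) (hZnonneg : ∀ α ∈ Ioc (0:ℝ) 1, 0 ≤ Z α)
    (hZint : Integrable Z μ) (hZ1 : Z 1 = 0) :
    ∀ ε > 0, ∃ φ ∈ ZBset, ∫ α in Ioc (0:ℝ) 1, |φ α - Z α| ∂μ < ε := by
  intro ε hε
  obtain ⟨f, hf, hf0, hf1, hfZ⟩ :=
    exists_continuous_nonneg_setIntegral_abs_sub_lt μ hZint.integrableOn hZnonneg hZ1
      (half_pos hε)
  obtain ⟨φ, hφ, hφf⟩ := exists_mem_ZBset_abs_sub_le hf hf0 hf1 (half_pos hε)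
  have hφf_int : ∫ α in Ioc (0:ℝ) 1, |φ α - f α| ∂μ ≤ ε / 2 := by
    refine (Real.le_norm_self _).trans ((norm_setIntegral_le_of_norm_le_const
      (f := fun α => |φ α - f α|) (measure_lt_top _ _)
      fun α hα => by simpa using hφf α (Ioc_subset_Icc_self hα)).trans ?_)
    exact mul_le_of_le_one_right (half_pos hε).le measureReal_le_one
  refine ⟨φ, hφ, ?_⟩
  calc ∫ α in Ioc (0:ℝ) 1, |φ α - Z α| ∂μ
      ≤ ∫ α in Ioc (0:ℝ) 1, |φ α - f α| ∂μ + ∫ α in Ioc (0:ℝ) 1, |f α - Z α| ∂μ :=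
        setIntegral_abs_sub_le_add (continuous_of_mem_ZBset hφ).integrableOn_Ioc
          hf.integrableOn_Ioc hZint.integrableOn
    _ < ε := by linarith

/-- the Bernstein polynomials with nonnegative coefficients and vanishing
top coefficient are dense in `{Z ∈ L¹₊(μ) : Z(1) = 0}` w.r.t. the `L¹(μ)`-norm. -/
theorem bernstein_dense_L1
    (μ : Measure ℝ) [IsProbabilityMeasure μ] (hsupp : μ (Ioc (0:ℝ) 1)ᶜ = 0)
    (Z : ℝ → ℝ) (hZmeas : Measurable Z) (hZnonneg : ∀ α ∈ Ioc (0:ℝ) 1, 0 ≤ Z α)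
    (hZint : Integrable Z μ) (hZ1 : Z 1 = 0) :
    ∀ ε > 0, ∃ φ ∈ ZBset, ∫ α in Ioc (0:ℝ) 1, |φ α - Z α| ∂μ < ε :=
  bernstein_dense_L1_general μ Z hZnonneg hZint hZ1

end DistortedStopping
end
end
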